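/- Hybrid quantum–classical continuity equation: let m, M, ħ > 0, let V : ℝⁿ × ℝᵐ → ℝ be smooth, set H_I(q,p,x) := |p|²/(2M) + V(q,x) and L_I(q,p,x) := |p|²/(2M) − V(q,x), and let 𝒮, ℛ : ℝ × (ℝ²ⁿ × ℝᵐ) → ℝ be smooth with ℛ > 0 satisfying the hybrid Madelung equations ∂ₜ𝒮 + |∇ₓ𝒮|²/(2m) − (ħ²/(2m))(Δₓℛ)/ℛ = L_I + {H_I, 𝒮} and ∂ₜℛ + (1/(2mℛ)) divₓ(ℛ² ∇ₓ𝒮) = {H_I, ℛ}. Then the hybrid density 𝒟 := ℛ² + Σᵢ ∂_{pᵢ}(pᵢ ℛ²) + {ℛ², 𝒮} satisfies ∂ₜ𝒟 = {H_I, 𝒟} − Σ_{k=1}^{m} ∂_{xᵏ} (J_Q)ₖ, where (J_Q)ₖ := (1/m)[ ℛ² ∂_{xᵏ}𝒮 + Σᵢ ∂_{pᵢ}(pᵢ ℛ² ∂_{xᵏ}𝒮) + {ℛ² ∂_{xᵏ}𝒮, 𝒮} − ħ² {ℛ, ∂_{xᵏ}ℛ} ]. -/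

import Mathlib

open Complex

noncomputable section

/-- Classical phase space `T*Q = ℝⁿ × ℝⁿ` with coordinates `z = (q, p)`. -/
abbrev PS (n : ℕ) := (Fin n → ℝ) × (Fin n → ℝ)

variable {n : ℕ}

/-- Partial derivative `∂f/∂qⁱ` of a complex-valued function on phase space. -/
noncomputable def dq (i : Fin n) (f : PS n → ℂ) (z : PS n) : ℂ :=
  fderiv ℝ f z (Pi.single i 1, 0)

/-- Partial derivative `∂f/∂pᵢ` of a complex-valued function on phase space. -/
noncomputable def dp (i : Fin n) (f : PS n → ℂ) (z : PS n) : ℂ :=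
  fderiv ℝ f z (0, Pi.single i 1)

/-- Partial derivative `∂f/∂qⁱ` of a real-valued function on phase space. -/
noncomputable def dqR (i : Fin n) (f : PS n → ℝ) (z : PS n) : ℝ :=
  fderiv ℝ f z (Pi.single i 1, 0)

/-- Partial derivative `∂f/∂pᵢ` of a real-valued function on phase space. -/
noncomputable def dpR (i : Fin n) (f : PS n → ℝ) (z : PS n) : ℝ :=
  fderiv ℝ f z (0, Pi.single i 1)

/-- Canonical Poisson bracket `{F,G} = Σᵢ (∂F/∂qⁱ ∂G/∂pᵢ − ∂F/∂pᵢ ∂G/∂qⁱ)`,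
extended ℂ-bilinearly to complex-valued functions. -/
noncomputable def pb (F G : PS n → ℂ) (z : PS n) : ℂ :=
  ∑ i, (dq i F z * dp i G z - dp i F z * dq i G z)

/-- Canonical Poisson bracket of real-valued functions. -/
noncomputable def pbR (F G : PS n → ℝ) (z : PS n) : ℝ :=
  ∑ i, (dqR i F z * dpR i G z - dpR i F z * dqR i G z)

/-- Hybrid quantum–classical coordinate space `Γ = ℝ²ⁿ × ℝᵈ`. -/
abbrev Hyb (n d : ℕ) := PS n × (Fin d → ℝ)

variable {d : ℕ}

/-- `∂f/∂qⁱ` on the hybrid space (real-valued). -/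
noncomputable def dqH (i : Fin n) (f : Hyb n d → ℝ) (w : Hyb n d) : ℝ :=
  fderiv ℝ f w ((Pi.single i 1, 0), 0)

/-- `∂f/∂pᵢ` on the hybrid space (real-valued). -/
noncomputable def dpH (i : Fin n) (f : Hyb n d → ℝ) (w : Hyb n d) : ℝ :=
  fderiv ℝ f w ((0, Pi.single i 1), 0)

/-- `∂f/∂xᵏ` on the hybrid space (real-valued). -/
noncomputable def dxH (k : Fin d) (f : Hyb n d → ℝ) (w : Hyb n d) : ℝ :=
  fderiv ℝ f w (0, Pi.single k 1)

/-- Canonical Poisson bracket in the phase-space variables `z = (q,p)` only,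
pointwise in the quantum coordinate `x`. -/
noncomputable def pbH (F G : Hyb n d → ℝ) (w : Hyb n d) : ℝ :=
  ∑ i, (dqH i F w * dpH i G w - dpH i F w * dqH i G w)

/-- Laplacian `Δₓ` in the quantum variables `x` (real-valued). -/
noncomputable def laplxH (f : Hyb n d → ℝ) (w : Hyb n d) : ℝ :=
  ∑ k, dxH k (fun w' => dxH k f w') w

/-- The classical-plus-interaction Hamiltonian `H_I(q,p,x) = |p|²/(2M) + V(q,x)`. -/
noncomputable def HI (M : ℝ) (V : (Fin n → ℝ) × (Fin d → ℝ) → ℝ) (w : Hyb n d) : ℝ :=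
  (∑ i, w.1.2 i ^ 2) / (2 * M) + V (w.1.1, w.2)

/-- The classical-plus-interaction Lagrangian `L_I(q,p,x) = |p|²/(2M) − V(q,x)`. -/
noncomputable def LI (M : ℝ) (V : (Fin n → ℝ) × (Fin d → ℝ) → ℝ) (w : Hyb n d) : ℝ :=
  (∑ i, w.1.2 i ^ 2) / (2 * M) - V (w.1.1, w.2)

/-- The hybrid density `𝒟 = ℛ² + Σᵢ ∂_{pᵢ}(pᵢ ℛ²) + {ℛ², 𝒮}` at a fixed time. -/
noncomputable def hybDen (ℛt 𝒮t : Hyb n d → ℝ) (w : Hyb n d) : ℝ :=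
  ℛt w ^ 2 + ∑ i, dpH i (fun w' => w'.1.2 i * ℛt w' ^ 2) w
    + pbH (fun w' => ℛt w' ^ 2) 𝒮t w

/-- The quantum component of the hybrid current,
`(J_Q)ₖ = (1/m)[ℛ² ∂_{xᵏ}𝒮 + Σᵢ ∂_{pᵢ}(pᵢ ℛ² ∂_{xᵏ}𝒮) + {ℛ² ∂_{xᵏ}𝒮, 𝒮} − ℏ²{ℛ, ∂_{xᵏ}ℛ}]`. -/
noncomputable def JQ (m ℏ : ℝ) (ℛt 𝒮t : Hyb n d → ℝ) (k : Fin d) (w : Hyb n d) : ℝ :=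
  (1 / m) * (ℛt w ^ 2 * dxH k 𝒮t w
    + ∑ i, dpH i (fun w' => w'.1.2 i * (ℛt w' ^ 2 * dxH k 𝒮t w')) w
    + pbH (fun w' => ℛt w' ^ 2 * dxH k 𝒮t w') 𝒮t w
    - ℏ ^ 2 * pbH ℛt (fun w' => dxH k ℛt w') w)

/-!
Write `ρ = ℛ²` and `𝒟_𝒮 f = f + Σᵢ ∂_{pᵢ}(pᵢ f) + {f, 𝒮}`, so that the hybrid density is `𝒟_𝒮 ρ`
and `(J_Q)ₖ = (1/m)(𝒟_𝒮(ρ ∂ₖ𝒮) − ħ²{ℛ, ∂ₖℛ})`. With the Euler operator `E = Σᵢ pᵢ ∂_{pᵢ}` one has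
`Σᵢ ∂_{pᵢ}(pᵢ f) = n f + E f` and `E{f, g} = {E f, g} + {f, E g} − {f, g}`, since every term of the
bracket carries exactly one momentum derivative. Together with the Jacobi identity this gives the
intertwining relation `𝒟_𝒮 {H, f} + {f, (E H − H) + {H, 𝒮}} = {H, 𝒟_𝒮 f}`, and `E H_I − H_I = L_I`.

The second Madelung equation says `∂ₜρ = {H_I, ρ} − (1/m) Σₖ ∂ₖ(ρ ∂ₖ𝒮)`. In
`∂ₜ𝒟_𝒮 ρ = 𝒟_𝒮(∂ₜρ) + {ρ, ∂ₜ𝒮}` the intertwining relation absorbs the classical terms of both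
Madelung equations into `{H_I, 𝒟}`; what remains is `−Σₖ ∂ₖ(J_Q)ₖ`, by
`{ρ, (∂ₖ𝒮)²} = 2 ∂ₖ𝒮 {ρ, ∂ₖ𝒮}`, `{ℛ², Δₓℛ/ℛ} = 2{ℛ, Δₓℛ}` and `∂ₖ{ℛ, ∂ₖℛ} = {ℛ, ∂ₖ²ℛ}`.

Everything is computed on `ℝ × Γ`, where the slice-wise derivatives of the statement are
directional derivatives of a single smooth function.
-/

open scoped ContDiff

section DirectionalDerivative

variable {E : Type*} [NormedAddCommGroup E] [NormedSpace ℝ E] {f g : E → ℝ} {u v x : E}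

def dirDeriv (v : E) (f : E → ℝ) (x : E) : ℝ := fderiv ℝ f x v

@[fun_prop]
theorem ContDiff.dirDeriv (hf : ContDiff ℝ ∞ f) (v : E) : ContDiff ℝ ∞ (dirDeriv v f) :=
  (hf.fderiv_right (m := ∞) le_rfl).clm_apply contDiff_const

@[fun_prop]
theorem ContDiff.differentiableAt_of_smooth (hf : ContDiff ℝ ∞ f) (x : E) :
    DifferentiableAt ℝ f x :=
  hf.differentiable (by simp) x

@[fun_prop]
theorem ContDiff.contDiffAt_two (hf : ContDiff ℝ ∞ f) (x : E) : ContDiffAt ℝ 2 f x :=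
  hf.contDiffAt.of_le (WithTop.coe_le_coe.2 le_top)

theorem dirDeriv_clm (ℓ : E →L[ℝ] ℝ) : dirDeriv v ℓ x = ℓ v := by
  simp [dirDeriv]

theorem dirDeriv_add (hf : DifferentiableAt ℝ f x) (hg : DifferentiableAt ℝ g x) :
    dirDeriv v (fun y => f y + g y) x = dirDeriv v f x + dirDeriv v g x := by
  simp [dirDeriv, fderiv_fun_add hf hg]

theorem dirDeriv_sub (hf : DifferentiableAt ℝ f x) (hg : DifferentiableAt ℝ g x) :
    dirDeriv v (fun y => f y - g y) x = dirDeriv v f x - dirDeriv v g x := by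
  simp [dirDeriv, fderiv_fun_sub hf hg]

theorem dirDeriv_const_mul (a : ℝ) (hf : DifferentiableAt ℝ f x) :
    dirDeriv v (fun y => a * f y) x = a * dirDeriv v f x := by
  simp [dirDeriv, fderiv_const_mul hf]

theorem dirDeriv_div_const (a : ℝ) (hf : DifferentiableAt ℝ f x) :
    dirDeriv v (fun y => f y / a) x = dirDeriv v f x / a := by
  simp only [div_eq_inv_mul, dirDeriv_const_mul _ hf]

theorem dirDeriv_mul (hf : DifferentiableAt ℝ f x) (hg : DifferentiableAt ℝ g x) :
    dirDeriv v (fun y => f y * g y) x = f x * dirDeriv v g x + g x * dirDeriv v f x := by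
  simp [dirDeriv, fderiv_fun_mul hf hg]

theorem dirDeriv_sq (hf : DifferentiableAt ℝ f x) :
    dirDeriv v (fun y => f y ^ 2) x = 2 * f x * dirDeriv v f x := by
  simp [dirDeriv, fderiv_fun_pow 2 hf]

theorem dirDeriv_inv (hf : DifferentiableAt ℝ f x) (hx : f x ≠ 0) :
    dirDeriv v (fun y => (f y)⁻¹) x = -dirDeriv v f x / f x ^ 2 := by
  have hinv := ((hasDerivAt_inv hx).hasFDerivAt.comp x hf.hasFDerivAt).fderiv
  simp only [Function.comp_def] at hinv
  simp [dirDeriv, hinv]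
  ring

theorem dirDeriv_div (hf : DifferentiableAt ℝ f x) (hg : DifferentiableAt ℝ g x) (hx : g x ≠ 0) :
    dirDeriv v (fun y => f y / g y) x
      = (g x * dirDeriv v f x - f x * dirDeriv v g x) / g x ^ 2 := by
  simp only [div_eq_mul_inv]
  rw [dirDeriv_mul (g := fun y => (g y)⁻¹) hf (hg.inv hx), dirDeriv_inv hg hx]
  field_simp
  ring

theorem dirDeriv_sum {ι : Type*} {s : Finset ι} {A : ι → E → ℝ}
    (hA : ∀ i, DifferentiableAt ℝ (A i) x) :
    dirDeriv v (fun y => ∑ i ∈ s, A i y) x = ∑ i ∈ s, dirDeriv v (A i) x := by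
  simp [dirDeriv, fderiv_fun_sum fun i _ => hA i]

theorem dirDeriv_eq_zero_of_forall_add_smul (hf : DifferentiableAt ℝ f x)
    (h : ∀ s : ℝ, f (x + s • v) = f x) : dirDeriv v f x = 0 := by
  rw [dirDeriv, ← hf.lineDeriv_eq_fderiv]
  simp [lineDeriv, h]

theorem dirDeriv_dirDeriv (hf : ContDiffAt ℝ 2 f x) :
    dirDeriv u (dirDeriv v f) x = fderiv ℝ (fderiv ℝ f) x u v := by
  have hd : DifferentiableAt ℝ (fderiv ℝ f) x :=
    (hf.fderiv_right (m := 1) le_rfl).differentiableAt one_ne_zero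
  change fderiv ℝ (fun y => fderiv ℝ f y v) x u = _
  simp [fderiv_clm_apply hd (differentiableAt_const v)]

theorem dirDeriv_comm (hf : ContDiffAt ℝ 2 f x) :
    dirDeriv u (dirDeriv v f) x = dirDeriv v (dirDeriv u f) x := by
  rw [dirDeriv_dirDeriv hf, dirDeriv_dirDeriv hf]
  exact hf.isSymmSndFDerivAt (by simp [minSmoothness_of_isRCLikeNormedField]) u v

end DirectionalDerivative

/-- Directions `Q i`, `P i` of the canonical coordinates `qⁱ`, `pᵢ`, with the momentum
coordinates `p i` as linear functionals. -/
structure CanonicalFrame (E : Type*) [NormedAddCommGroup E] [NormedSpace ℝ E] (n : ℕ) where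
  Q : Fin n → E
  P : Fin n → E
  p : Fin n → E →L[ℝ] ℝ
  p_Q : ∀ i j, p i (Q j) = 0
  p_P : ∀ i j, p i (P j) = if i = j then 1 else 0

namespace CanonicalFrame

variable {E : Type*} [NormedAddCommGroup E] [NormedSpace ℝ E] (c : CanonicalFrame E n)
  {f g h H R S : E → ℝ} {v x : E}

section Poisson

def poisson (f g : E → ℝ) (x : E) : ℝ :=
  ∑ i, (dirDeriv (c.Q i) f x * dirDeriv (c.P i) g x - dirDeriv (c.P i) f x * dirDeriv (c.Q i) g x)

def hamVec (g : E → ℝ) (x : E) : E :=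
  ∑ i, (dirDeriv (c.P i) g x • c.Q i - dirDeriv (c.Q i) g x • c.P i)

@[fun_prop]
theorem contDiff_poisson (hf : ContDiff ℝ ∞ f) (hg : ContDiff ℝ ∞ g) :
    ContDiff ℝ ∞ (c.poisson f g) := by
  unfold poisson
  fun_prop

theorem poisson_eq_dirDeriv_hamVec : c.poisson f g x = dirDeriv (c.hamVec g x) f x := by
  simp only [poisson, hamVec, dirDeriv, map_sum, map_sub, map_smul, smul_eq_mul]
  exact Finset.sum_congr rfl fun i _ => by ring

theorem poisson_swap (f g : E → ℝ) (x : E) : c.poisson g f x = -c.poisson f g x := by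
  simp only [poisson, ← Finset.sum_neg_distrib]
  exact Finset.sum_congr rfl fun i _ => by ring

theorem poisson_self (f : E → ℝ) (x : E) : c.poisson f f x = 0 := by
  linarith [c.poisson_swap f f x]

theorem poisson_add_left (hf : DifferentiableAt ℝ f x) (hg : DifferentiableAt ℝ g x) :
    c.poisson (fun y => f y + g y) h x = c.poisson f h x + c.poisson g h x := by
  simp only [poisson_eq_dirDeriv_hamVec, dirDeriv_add hf hg]

theorem poisson_sub_left (hf : DifferentiableAt ℝ f x) (hg : DifferentiableAt ℝ g x) :
    c.poisson (fun y => f y - g y) h x = c.poisson f h x - c.poisson g h x := by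
  simp only [poisson_eq_dirDeriv_hamVec, dirDeriv_sub hf hg]

theorem poisson_const_mul_left (a : ℝ) (hf : DifferentiableAt ℝ f x) :
    c.poisson (fun y => a * f y) h x = a * c.poisson f h x := by
  simp only [poisson_eq_dirDeriv_hamVec, dirDeriv_const_mul a hf]

theorem poisson_mul_left (hf : DifferentiableAt ℝ f x) (hg : DifferentiableAt ℝ g x) :
    c.poisson (fun y => f y * g y) h x = f x * c.poisson g h x + g x * c.poisson f h x := by
  simp only [poisson_eq_dirDeriv_hamVec, dirDeriv_mul hf hg]

theorem poisson_sq_left (hf : DifferentiableAt ℝ f x) :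
    c.poisson (fun y => f y ^ 2) h x = 2 * f x * c.poisson f h x := by
  simp only [poisson_eq_dirDeriv_hamVec, dirDeriv_sq hf]

theorem poisson_sum_left {ι : Type*} {s : Finset ι} {A : ι → E → ℝ}
    (hA : ∀ i, DifferentiableAt ℝ (A i) x) :
    c.poisson (fun y => ∑ i ∈ s, A i y) h x = ∑ i ∈ s, c.poisson (A i) h x := by
  simp only [poisson_eq_dirDeriv_hamVec, dirDeriv_sum hA]

theorem poisson_add_right (hg : DifferentiableAt ℝ g x) (hh : DifferentiableAt ℝ h x) :
    c.poisson f (fun y => g y + h y) x = c.poisson f g x + c.poisson f h x := by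
  rw [c.poisson_swap, c.poisson_add_left hg hh, c.poisson_swap g, c.poisson_swap h]
  ring

theorem poisson_sub_right (hg : DifferentiableAt ℝ g x) (hh : DifferentiableAt ℝ h x) :
    c.poisson f (fun y => g y - h y) x = c.poisson f g x - c.poisson f h x := by
  rw [c.poisson_swap, c.poisson_sub_left hg hh, c.poisson_swap g, c.poisson_swap h]
  ring

theorem poisson_const_mul_right (a : ℝ) (hg : DifferentiableAt ℝ g x) :
    c.poisson f (fun y => a * g y) x = a * c.poisson f g x := by
  rw [c.poisson_swap, c.poisson_const_mul_left a hg, c.poisson_swap g]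
  ring

theorem poisson_sq_right (hg : DifferentiableAt ℝ g x) :
    c.poisson f (fun y => g y ^ 2) x = 2 * g x * c.poisson f g x := by
  rw [c.poisson_swap, c.poisson_sq_left hg, c.poisson_swap g]
  ring

theorem poisson_div_right (hg : DifferentiableAt ℝ g x) (hh : DifferentiableAt ℝ h x)
    (hx : h x ≠ 0) :
    c.poisson f (fun y => g y / h y) x
      = (h x * c.poisson f g x - g x * c.poisson f h x) / h x ^ 2 := by
  rw [c.poisson_swap, poisson_eq_dirDeriv_hamVec, dirDeriv_div hg hh hx,
    ← poisson_eq_dirDeriv_hamVec, ← poisson_eq_dirDeriv_hamVec, c.poisson_swap g,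
    c.poisson_swap h]
  ring

theorem poisson_sum_right {ι : Type*} {s : Finset ι} {A : ι → E → ℝ}
    (hA : ∀ i, DifferentiableAt ℝ (A i) x) :
    c.poisson f (fun y => ∑ i ∈ s, A i y) x = ∑ i ∈ s, c.poisson f (A i) x := by
  rw [c.poisson_swap, c.poisson_sum_left hA, ← Finset.sum_neg_distrib]
  exact Finset.sum_congr rfl fun i _ => (c.poisson_swap (A i) f x).symm

theorem poisson_sq_div (hR : DifferentiableAt ℝ R x) (hg : DifferentiableAt ℝ g x)
    (hx : R x ≠ 0) :
    c.poisson (fun y => R y ^ 2) (fun y => g y / R y) x = 2 * c.poisson R g x := by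
  rw [c.poisson_sq_left hR, c.poisson_div_right hg hR hx, c.poisson_self]
  field_simp
  ring

theorem dirDeriv_poisson (hf : ContDiff ℝ ∞ f) (hg : ContDiff ℝ ∞ g) :
    dirDeriv v (c.poisson f g) x = c.poisson (dirDeriv v f) g x + c.poisson f (dirDeriv v g) x := by
  change dirDeriv v (fun y => ∑ i, _) x = _
  rw [dirDeriv_sum fun i => by fun_prop]
  simp only [poisson, ← Finset.sum_add_distrib]
  refine Finset.sum_congr rfl fun i _ => ?_
  rw [dirDeriv_sub (by fun_prop) (by fun_prop), dirDeriv_mul (by fun_prop) (by fun_prop),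
    dirDeriv_mul (by fun_prop) (by fun_prop), dirDeriv_comm (hf.contDiffAt_two x) (v := c.Q i),
    dirDeriv_comm (hf.contDiffAt_two x) (v := c.P i),
    dirDeriv_comm (hg.contDiffAt_two x) (v := c.Q i),
    dirDeriv_comm (hg.contDiffAt_two x) (v := c.P i)]
  ring

theorem poisson_poisson_left (hH : ContDiff ℝ ∞ H) (hf : ContDiff ℝ ∞ f) :
    c.poisson (c.poisson H f) g x
      = ∑ j, (dirDeriv (c.Q j) H x * c.poisson (dirDeriv (c.P j) f) g x
          - dirDeriv (c.P j) H x * c.poisson (dirDeriv (c.Q j) f) g x)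
        + fderiv ℝ (fderiv ℝ H) x (c.hamVec g x) (c.hamVec f x) := by
  set Xg := c.hamVec g x
  have hHess : ∀ w, c.poisson (dirDeriv w H) g x = fderiv ℝ (fderiv ℝ H) x Xg w := fun w => by
    rw [poisson_eq_dirDeriv_hamVec, dirDeriv_dirDeriv (hH.contDiffAt_two x)]
  change c.poisson (fun y => ∑ j, (dirDeriv (c.Q j) H y * dirDeriv (c.P j) f y
    - dirDeriv (c.P j) H y * dirDeriv (c.Q j) f y)) g x = _
  rw [c.poisson_sum_left fun j => by fun_prop]
  simp only [hamVec, map_sum, map_sub, map_smul, smul_eq_mul]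
  simp only [← hHess, ← Finset.sum_add_distrib]
  refine Finset.sum_congr rfl fun j _ => ?_
  rw [c.poisson_sub_left (by fun_prop) (by fun_prop),
    c.poisson_mul_left (by fun_prop) (by fun_prop), c.poisson_mul_left (by fun_prop) (by fun_prop)]
  ring

theorem poisson_jacobi (hH : ContDiff ℝ ∞ H) (hf : ContDiff ℝ ∞ f) (hg : ContDiff ℝ ∞ g) :
    c.poisson H (c.poisson f g) x
      = c.poisson (c.poisson H f) g x + c.poisson f (c.poisson H g) x := by
  have hswap : ∀ w, c.poisson (dirDeriv w g) f x = -c.poisson f (dirDeriv w g) x :=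
    fun w => c.poisson_swap _ _ _
  -- the Hessian terms of `H` left over by the two outer brackets cancel by symmetry
  have hsymm := (hH.contDiffAt_two x).isSymmSndFDerivAt
    (by simp [minSmoothness_of_isRCLikeNormedField]) (c.hamVec f x) (c.hamVec g x)
  rw [c.poisson_swap (c.poisson H g) f, c.poisson_poisson_left hH hf,
    c.poisson_poisson_left hH hg, hsymm]
  conv_lhs => rw [poisson]
  simp only [dirDeriv_poisson c hf hg, hswap]
  rw [← sub_eq_add_neg, add_sub_add_right_eq_sub, ← Finset.sum_sub_distrib]
  exact Finset.sum_congr rfl fun j _ => by ring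

end Poisson

section Euler

def euler (f : E → ℝ) (x : E) : ℝ := ∑ i, c.p i x * dirDeriv (c.P i) f x

/-- The Legendre transform of `H` in the momenta; for `H_I` it is `L_I`
(`legendre_kinetic_add_potential`). -/
def legendre (H : E → ℝ) (x : E) : ℝ := c.euler H x - H x

def density (f : E → ℝ) (x : E) : ℝ :=
  f x + ∑ i, dirDeriv (c.P i) (fun y => c.p i y * f y) x

@[fun_prop]
theorem contDiff_euler (hf : ContDiff ℝ ∞ f) : ContDiff ℝ ∞ (c.euler f) := by
  unfold euler
  fun_prop

@[fun_prop]
theorem contDiff_legendre (hH : ContDiff ℝ ∞ H) : ContDiff ℝ ∞ (c.legendre H) := by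
  unfold legendre
  fun_prop

@[fun_prop]
theorem contDiff_density (hf : ContDiff ℝ ∞ f) : ContDiff ℝ ∞ (c.density f) := by
  unfold density
  fun_prop

theorem euler_eq_dirDeriv : c.euler f x = dirDeriv (∑ i, c.p i x • c.P i) f x := by
  simp [euler, dirDeriv, map_sum]

theorem euler_sub (hf : DifferentiableAt ℝ f x) (hg : DifferentiableAt ℝ g x) :
    c.euler (fun y => f y - g y) x = c.euler f x - c.euler g x := by
  simp only [euler_eq_dirDeriv, dirDeriv_sub hf hg]

theorem euler_const_mul (a : ℝ) (hf : DifferentiableAt ℝ f x) :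
    c.euler (fun y => a * f y) x = a * c.euler f x := by
  simp only [euler_eq_dirDeriv, dirDeriv_const_mul a hf]

theorem euler_mul (hf : DifferentiableAt ℝ f x) (hg : DifferentiableAt ℝ g x) :
    c.euler (fun y => f y * g y) x = f x * c.euler g x + g x * c.euler f x := by
  simp only [euler_eq_dirDeriv, dirDeriv_mul hf hg]

theorem euler_sum {ι : Type*} {s : Finset ι} {A : ι → E → ℝ}
    (hA : ∀ i, DifferentiableAt ℝ (A i) x) :
    c.euler (fun y => ∑ i ∈ s, A i y) x = ∑ i ∈ s, c.euler (A i) x := by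
  simp only [euler_eq_dirDeriv, dirDeriv_sum hA]

theorem dirDeriv_euler (hv : ∀ i, c.p i v = 0) (hf : ContDiff ℝ ∞ f) :
    dirDeriv v (c.euler f) x = c.euler (dirDeriv v f) x := by
  change dirDeriv v (fun y => ∑ i, c.p i y * dirDeriv (c.P i) f y) x = _
  rw [dirDeriv_sum fun i => by fun_prop]
  refine Finset.sum_congr rfl fun i _ => ?_
  rw [dirDeriv_mul (by fun_prop) (by fun_prop), dirDeriv_clm, hv,
    dirDeriv_comm (hf.contDiffAt_two x)]
  ring

theorem dirDeriv_P_euler (j : Fin n) (hf : ContDiff ℝ ∞ f) :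
    dirDeriv (c.P j) (c.euler f) x = dirDeriv (c.P j) f x + c.euler (dirDeriv (c.P j) f) x := by
  change dirDeriv (c.P j) (fun y => ∑ i, c.p i y * dirDeriv (c.P i) f y) x = _
  have hterm : ∀ i, dirDeriv (c.P j) (fun y => c.p i y * dirDeriv (c.P i) f y) x
      = (if i = j then dirDeriv (c.P i) f x else 0)
        + c.p i x * dirDeriv (c.P i) (dirDeriv (c.P j) f) x := fun i => by
    rw [dirDeriv_mul (by fun_prop) (by fun_prop), dirDeriv_clm, c.p_P,
      dirDeriv_comm (hf.contDiffAt_two x)]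
    split_ifs <;> ring
  rw [dirDeriv_sum fun i => by fun_prop]
  simp only [hterm, Finset.sum_add_distrib, Finset.sum_ite_eq', Finset.mem_univ, if_true, euler]

theorem euler_poisson (hf : ContDiff ℝ ∞ f) (hg : ContDiff ℝ ∞ g) :
    c.euler (c.poisson f g) x
      = c.poisson (c.euler f) g x + c.poisson f (c.euler g) x - c.poisson f g x := by
  change c.euler (fun y => ∑ i, _) x = _
  rw [c.euler_sum fun i => by fun_prop]
  simp only [poisson, ← Finset.sum_sub_distrib, ← Finset.sum_add_distrib]
  refine Finset.sum_congr rfl fun i _ => ?_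
  rw [c.euler_sub (by fun_prop) (by fun_prop), c.euler_mul (by fun_prop) (by fun_prop),
    c.euler_mul (by fun_prop) (by fun_prop), c.dirDeriv_euler (fun j => c.p_Q j i) hf,
    c.dirDeriv_euler (fun j => c.p_Q j i) hg, c.dirDeriv_P_euler i hf, c.dirDeriv_P_euler i hg]
  ring

theorem legendre_kinetic_add_potential {M : ℝ} {V : E → ℝ} (hV : DifferentiableAt ℝ V x)
    (hVP : ∀ i, dirDeriv (c.P i) V x = 0) :
    c.legendre (fun y => (∑ i, c.p i y ^ 2) / (2 * M) + V y) x
      = (∑ i, c.p i x ^ 2) / (2 * M) - V x := by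
  have hP : ∀ i, dirDeriv (c.P i) (fun y => (∑ j, c.p j y ^ 2) / (2 * M) + V y) x
      = 2 * c.p i x / (2 * M) := fun i => by
    rw [dirDeriv_add (by fun_prop) hV, dirDeriv_div_const _ (by fun_prop),
      dirDeriv_sum fun j => by fun_prop, hVP]
    simp [dirDeriv_sq, dirDeriv_clm, c.p_P]
  have hsum : ∑ i, c.p i x * (2 * c.p i x / (2 * M)) = 2 * ((∑ i, c.p i x ^ 2) / (2 * M)) := by
    rw [Finset.sum_div, Finset.mul_sum]
    exact Finset.sum_congr rfl fun i _ => by ring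
  simp only [legendre, euler, hP, hsum]
  ring

theorem density_eq_euler (hf : DifferentiableAt ℝ f x) :
    c.density f x = (n + 1) * f x + c.euler f x := by
  have hterm : ∀ i, dirDeriv (c.P i) (fun y => c.p i y * f y) x
      = f x + c.p i x * dirDeriv (c.P i) f x := fun i => by
    rw [dirDeriv_mul (c.p i).differentiableAt hf, dirDeriv_clm, c.p_P]
    simp only [if_true]
    ring
  simp only [density, euler, hterm, Finset.sum_add_distrib, Finset.sum_const, Finset.card_univ,
    Fintype.card_fin, nsmul_eq_mul]
  ring

theorem density_fun_eq_euler (hf : ContDiff ℝ ∞ f) :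
    c.density f = fun y => (n + 1) * f y + c.euler f y :=
  funext fun _ => c.density_eq_euler (by fun_prop)

theorem dirDeriv_density (hv : ∀ i, c.p i v = 0) (hf : ContDiff ℝ ∞ f) :
    dirDeriv v (c.density f) x = c.density (dirDeriv v f) x := by
  rw [c.density_fun_eq_euler hf, dirDeriv_add (by fun_prop) (by fun_prop),
    dirDeriv_const_mul _ (by fun_prop), c.dirDeriv_euler hv hf, c.density_eq_euler (by fun_prop)]

theorem density_poisson (hH : ContDiff ℝ ∞ H) (hf : ContDiff ℝ ∞ f) :
    c.density (c.poisson H f) x + c.poisson f (c.legendre H) x = c.poisson H (c.density f) x := by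
  rw [c.density_eq_euler (by fun_prop), c.density_fun_eq_euler hf,
    c.poisson_add_right (by fun_prop) (by fun_prop), c.poisson_const_mul_right _ (by fun_prop),
    show c.legendre H = fun y => c.euler H y - H y from rfl,
    c.poisson_sub_right (by fun_prop) (by fun_prop), c.euler_poisson hH hf,
    c.poisson_swap f (c.euler H), c.poisson_swap f H]
  ring

end Euler

section Hybrid

def hybridDensity (S f : E → ℝ) (x : E) : ℝ := c.density f x + c.poisson f S x

def quantumCurrent (m ħ : ℝ) (X : Fin d → E) (R S : E → ℝ) (k : Fin d) (x : E) : ℝ :=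
  1 / m * (c.hybridDensity S (fun y => R y ^ 2 * dirDeriv (X k) S y) x
    - ħ ^ 2 * c.poisson R (dirDeriv (X k) R) x)

@[fun_prop]
theorem contDiff_hybridDensity (hS : ContDiff ℝ ∞ S) (hf : ContDiff ℝ ∞ f) :
    ContDiff ℝ ∞ (c.hybridDensity S f) := by
  unfold hybridDensity
  fun_prop

@[fun_prop]
theorem contDiff_quantumCurrent {m ħ : ℝ} {X : Fin d → E} (k : Fin d) (hR : ContDiff ℝ ∞ R)
    (hS : ContDiff ℝ ∞ S) : ContDiff ℝ ∞ (c.quantumCurrent m ħ X R S k) := by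
  unfold quantumCurrent
  fun_prop

theorem hybridDensity_sub (hf : DifferentiableAt ℝ f x) (hg : DifferentiableAt ℝ g x) :
    c.hybridDensity S (fun y => f y - g y) x = c.hybridDensity S f x - c.hybridDensity S g x := by
  simp only [hybridDensity, c.density_eq_euler (hf.fun_sub hg), c.density_eq_euler hf,
    c.density_eq_euler hg, c.euler_sub hf hg, c.poisson_sub_left hf hg]
  ring

theorem hybridDensity_const_mul (a : ℝ) (hf : DifferentiableAt ℝ f x) :
    c.hybridDensity S (fun y => a * f y) x = a * c.hybridDensity S f x := by
  simp only [hybridDensity, c.density_eq_euler (hf.const_mul a), c.density_eq_euler hf,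
    c.euler_const_mul a hf, c.poisson_const_mul_left a hf]
  ring

theorem hybridDensity_sum {ι : Type*} {s : Finset ι} {A : ι → E → ℝ}
    (hA : ∀ i, DifferentiableAt ℝ (A i) x) :
    c.hybridDensity S (fun y => ∑ i ∈ s, A i y) x = ∑ i ∈ s, c.hybridDensity S (A i) x := by
  simp only [hybridDensity, c.density_eq_euler (DifferentiableAt.fun_sum fun i _ => hA i),
    c.density_eq_euler (hA _), c.euler_sum hA, c.poisson_sum_left hA, Finset.sum_add_distrib,
    Finset.mul_sum]

theorem dirDeriv_hybridDensity (hv : ∀ i, c.p i v = 0) (hS : ContDiff ℝ ∞ S)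
    (hf : ContDiff ℝ ∞ f) :
    dirDeriv v (c.hybridDensity S f) x
      = c.hybridDensity S (dirDeriv v f) x + c.poisson f (dirDeriv v S) x := by
  change dirDeriv v (fun y => c.density f y + c.poisson f S y) x = _
  rw [dirDeriv_add (by fun_prop) (by fun_prop), c.dirDeriv_density hv hf,
    c.dirDeriv_poisson hf hS, hybridDensity]
  ring

theorem hybridDensity_poisson (hH : ContDiff ℝ ∞ H) (hS : ContDiff ℝ ∞ S) (hf : ContDiff ℝ ∞ f) :
    c.hybridDensity S (c.poisson H f) x
        + c.poisson f (fun y => c.legendre H y + c.poisson H S y) x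
      = c.poisson H (c.hybridDensity S f) x := by
  change _ = c.poisson H (fun y => c.density f y + c.poisson f S y) x
  rw [hybridDensity, c.poisson_add_right (by fun_prop) (by fun_prop),
    c.poisson_add_right (by fun_prop) (by fun_prop), ← c.density_poisson hH hf,
    c.poisson_jacobi hH hf hS]
  ring

theorem dirDeriv_quantumCurrent {m ħ : ℝ} {X : Fin d → E} {k : Fin d}
    (hX : ∀ i, c.p i (X k) = 0) (hR : ContDiff ℝ ∞ R) (hS : ContDiff ℝ ∞ S) :
    dirDeriv (X k) (c.quantumCurrent m ħ X R S k) x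
      = 1 / m * (c.hybridDensity S (dirDeriv (X k) (fun y => R y ^ 2 * dirDeriv (X k) S y)) x
        + dirDeriv (X k) S x * c.poisson (fun y => R y ^ 2) (dirDeriv (X k) S) x
        - ħ ^ 2 * c.poisson R (dirDeriv (X k) (dirDeriv (X k) R)) x) := by
  change dirDeriv (X k) (fun y => 1 / m * (c.hybridDensity S
    (fun y => R y ^ 2 * dirDeriv (X k) S y) y - ħ ^ 2 * c.poisson R (dirDeriv (X k) R) y)) x = _
  rw [dirDeriv_const_mul _ (by fun_prop), dirDeriv_sub (by fun_prop) (by fun_prop),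
    c.dirDeriv_hybridDensity hX hS (by fun_prop), dirDeriv_const_mul _ (by fun_prop),
    c.dirDeriv_poisson hR (by fun_prop), c.poisson_self,
    c.poisson_mul_left (by fun_prop) (by fun_prop), c.poisson_self]
  ring

theorem dirDeriv_sq_of_transport {m w : ℝ} (hR : DifferentiableAt ℝ R x) (hx : R x ≠ 0)
    (h : dirDeriv v R x + 1 / (2 * m * R x) * w = c.poisson H R x) :
    dirDeriv v (fun y => R y ^ 2) x = c.poisson H (fun y => R y ^ 2) x - m⁻¹ * w := by
  rw [dirDeriv_sq hR, c.poisson_sq_right hR, ← h]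
  field_simp
  ring

theorem dirDeriv_hybridDensity_of_madelung {τ : E} {X : Fin d → E} {m ħ : ℝ}
    (hτ : ∀ i, c.p i τ = 0) (hX : ∀ i k, c.p i (X k) = 0)
    (hH : ContDiff ℝ ∞ H) (hS : ContDiff ℝ ∞ S) (hR : ContDiff ℝ ∞ R) (hR0 : ∀ y, R y ≠ 0)
    (hamiltonJacobi : ∀ y, dirDeriv τ S y + (∑ k, dirDeriv (X k) S y ^ 2) / (2 * m)
        - ħ ^ 2 / (2 * m) * (∑ k, dirDeriv (X k) (dirDeriv (X k) R) y) / R y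
      = c.legendre H y + c.poisson H S y)
    (transport : ∀ y, dirDeriv τ R y
        + 1 / (2 * m * R y) * ∑ k, dirDeriv (X k) (fun z => R z ^ 2 * dirDeriv (X k) S z) y
      = c.poisson H R y) (x : E) :
    dirDeriv τ (c.hybridDensity S (fun y => R y ^ 2)) x
      = c.poisson H (c.hybridDensity S (fun y => R y ^ 2)) x
        - ∑ k, dirDeriv (X k) (c.quantumCurrent m ħ X R S k) x := by
  have hρ_t : dirDeriv τ (fun y => R y ^ 2) = fun y => c.poisson H (fun y => R y ^ 2) y
      - m⁻¹ * ∑ k, dirDeriv (X k) (fun z => R z ^ 2 * dirDeriv (X k) S z) y :=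
    funext fun y => c.dirDeriv_sq_of_transport (by fun_prop) (hR0 y) (transport y)
  have hS_t : dirDeriv τ S = fun y => (c.legendre H y + c.poisson H S y)
      - (2 * m)⁻¹ * ∑ k, dirDeriv (X k) S y ^ 2
      + ħ ^ 2 * (2 * m)⁻¹ * ((∑ k, dirDeriv (X k) (dirDeriv (X k) R) y) / R y) :=
    funext fun y => by linear_combination hamiltonJacobi y
  have hgrad : c.poisson (fun y => R y ^ 2) (fun y => ∑ k, dirDeriv (X k) S y ^ 2) x
      = 2 * ∑ k, dirDeriv (X k) S x * c.poisson (fun y => R y ^ 2) (dirDeriv (X k) S) x := by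
    rw [c.poisson_sum_right fun k => by fun_prop, Finset.mul_sum]
    exact Finset.sum_congr rfl fun k _ => by rw [c.poisson_sq_right (by fun_prop)]; ring
  rw [c.dirDeriv_hybridDensity hτ hS (by fun_prop), hρ_t, hS_t,
    c.hybridDensity_sub (by fun_prop) (by fun_prop), c.hybridDensity_const_mul _ (by fun_prop),
    c.hybridDensity_sum fun k => by fun_prop,
    c.poisson_add_right (by fun_prop) (by fun_prop (disch := exact hR0 _)),
    c.poisson_sub_right (by fun_prop) (by fun_prop), c.poisson_const_mul_right _ (by fun_prop),
    c.poisson_const_mul_right _ (by fun_prop (disch := exact hR0 _)), hgrad,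
    c.poisson_sq_div (by fun_prop) (by fun_prop) (hR0 x), c.poisson_sum_right fun k => by fun_prop,
    ← c.hybridDensity_poisson hH hS (by fun_prop)]
  simp only [c.dirDeriv_quantumCurrent (fun i => hX i _) hR hS, ← Finset.mul_sum,
    Finset.sum_add_distrib, Finset.sum_sub_distrib]
  ring

end Hybrid

end CanonicalFrame

section Slices

theorem fderiv_slice {G : Type*} [NormedAddCommGroup G] [NormedSpace ℝ G] {F : ℝ × G → ℝ}
    {t : ℝ} {w : G} (hF : DifferentiableAt ℝ F (t, w)) (v : G) :
    fderiv ℝ (fun w' => F (t, w')) w v = dirDeriv (0, v) F (t, w) := by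
  have hslice : HasFDerivAt (fun w' : G => (t, w')) ((0 : G →L[ℝ] ℝ).prod (.id ℝ G)) w :=
    (hasFDerivAt_const t w).prodMk (hasFDerivAt_id w)
  have hcomp : HasFDerivAt (fun w' => F (t, w')) _ w := hF.hasFDerivAt.comp w hslice
  rw [hcomp.fderiv]
  rfl

theorem deriv_slice {G : Type*} [NormedAddCommGroup G] [NormedSpace ℝ G] {F : ℝ × G → ℝ}
    {t : ℝ} {w : G} (hF : DifferentiableAt ℝ F (t, w)) :
    deriv (fun s => F (s, w)) t = dirDeriv (1, 0) F (t, w) :=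
  (hF.hasFDerivAt.comp_hasDerivAt t ((hasDerivAt_id t).prodMk (hasDerivAt_const t w))).deriv

def hybridFrame (n d : ℕ) : CanonicalFrame (ℝ × Hyb n d) n where
  Q i := (0, (Pi.single i 1, 0), 0)
  P i := (0, (0, Pi.single i 1), 0)
  p i := (ContinuousLinearMap.proj i).comp ((ContinuousLinearMap.snd ℝ _ _).comp
    ((ContinuousLinearMap.fst ℝ _ _).comp (ContinuousLinearMap.snd ℝ _ _)))
  p_Q i j := by simp
  p_P i j := by simp [Pi.single_apply]

def quantumDir (n : ℕ) (k : Fin d) : ℝ × Hyb n d := (0, 0, Pi.single k 1)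

theorem hybridFrame_p_apply (i : Fin n) (y : ℝ × Hyb n d) :
    (hybridFrame n d).p i y = y.2.1.2 i :=
  rfl

variable {F G R S : ℝ × Hyb n d → ℝ} {M : ℝ} {V : (Fin n → ℝ) × (Fin d → ℝ) → ℝ} {t : ℝ}
  {w : Hyb n d}

theorem dqH_slice (hF : DifferentiableAt ℝ F (t, w)) (i : Fin n) :
    dqH i (fun w' => F (t, w')) w = dirDeriv ((hybridFrame n d).Q i) F (t, w) :=
  fderiv_slice hF _

theorem dpH_slice (hF : DifferentiableAt ℝ F (t, w)) (i : Fin n) :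
    dpH i (fun w' => F (t, w')) w = dirDeriv ((hybridFrame n d).P i) F (t, w) :=
  fderiv_slice hF _

theorem dxH_slice (hF : DifferentiableAt ℝ F (t, w)) (k : Fin d) :
    dxH k (fun w' => F (t, w')) w = dirDeriv (quantumDir n k) F (t, w) :=
  fderiv_slice hF _

theorem pbH_slice (hF : DifferentiableAt ℝ F (t, w)) (hG : DifferentiableAt ℝ G (t, w)) :
    pbH (fun w' => F (t, w')) (fun w' => G (t, w')) w = (hybridFrame n d).poisson F G (t, w) := by
  simp only [pbH, CanonicalFrame.poisson, dqH_slice hF, dpH_slice hF, dqH_slice hG, dpH_slice hG]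

theorem contDiff_HI (hV : ContDiff ℝ ∞ V) :
    ContDiff ℝ ∞ (fun y : ℝ × Hyb n d => HI M V y.2) := by
  unfold HI
  fun_prop

theorem legendre_HI (hV : ContDiff ℝ ∞ V) (y : ℝ × Hyb n d) :
    (hybridFrame n d).legendre (fun y => HI M V y.2) y = LI M V y.2 :=
  (hybridFrame n d).legendre_kinetic_add_potential (V := fun y => V (y.2.1.1, y.2.2))
    (by fun_prop) fun i => dirDeriv_eq_zero_of_forall_add_smul (by fun_prop)
      fun s => by simp [hybridFrame]

theorem pbH_HI_slice (hV : ContDiff ℝ ∞ V) (hS : DifferentiableAt ℝ S (t, w)) :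
    pbH (HI M V) (fun w' => S (t, w')) w
      = (hybridFrame n d).poisson (fun y => HI M V y.2) S (t, w) :=
  pbH_slice (F := fun y => HI M V y.2) ((contDiff_HI hV).differentiableAt_of_smooth _) hS

theorem hybDen_slice (hR : ContDiff ℝ ∞ R) (hS : ContDiff ℝ ∞ S) :
    hybDen (fun w' => R (t, w')) (fun w' => S (t, w')) w
      = (hybridFrame n d).hybridDensity S (fun y => R y ^ 2) (t, w) := by
  simp (disch := fun_prop) only [CanonicalFrame.hybridDensity, CanonicalFrame.density,
    ← dpH_slice, ← pbH_slice, hybridFrame_p_apply]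
  rfl

theorem JQ_slice {m ħ : ℝ} (hR : ContDiff ℝ ∞ R) (hS : ContDiff ℝ ∞ S) (k : Fin d) :
    JQ m ħ (fun w' => R (t, w')) (fun w' => S (t, w')) k w
      = (hybridFrame n d).quantumCurrent m ħ (quantumDir n) R S k (t, w) := by
  simp (disch := fun_prop) only [CanonicalFrame.quantumCurrent, CanonicalFrame.hybridDensity,
    CanonicalFrame.density, ← dpH_slice, ← pbH_slice, ← dxH_slice, hybridFrame_p_apply]
  rfl

end Slices

theorem hybrid_continuity_general (n d : ℕ) (m M ℏ : ℝ)
    (V : (Fin n → ℝ) × (Fin d → ℝ) → ℝ) (hV : ContDiff ℝ (⊤ : ℕ∞) V)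
    (𝒮 ℛ : ℝ × Hyb n d → ℝ)
    (h𝒮 : ContDiff ℝ (⊤ : ℕ∞) 𝒮) (hℛ : ContDiff ℝ (⊤ : ℕ∞) ℛ)
    (hpos : ∀ t w, 0 < ℛ (t, w))
    (hMad1 : ∀ (t : ℝ) (w : Hyb n d),
      deriv (fun s => 𝒮 (s, w)) t
          + (∑ k, dxH k (fun w' => 𝒮 (t, w')) w ^ 2) / (2 * m)
          - (ℏ ^ 2 / (2 * m)) * laplxH (fun w' => ℛ (t, w')) w / ℛ (t, w)
        = LI M V w + pbH (HI M V) (fun w' => 𝒮 (t, w')) w)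
    (hMad2 : ∀ (t : ℝ) (w : Hyb n d),
      deriv (fun s => ℛ (s, w)) t
          + (1 / (2 * m * ℛ (t, w))) *
              (∑ k, dxH k (fun w' => ℛ (t, w') ^ 2 * dxH k (fun w'' => 𝒮 (t, w'')) w') w)
        = pbH (HI M V) (fun w' => ℛ (t, w')) w) :
    ∀ (t : ℝ) (w : Hyb n d),
      deriv (fun s => hybDen (fun w' => ℛ (s, w')) (fun w' => 𝒮 (s, w')) w) t
        = pbH (HI M V)
            (fun w' => hybDen (fun w'' => ℛ (t, w'')) (fun w'' => 𝒮 (t, w'')) w') w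
          - ∑ k, dxH k
              (fun w' => JQ m ℏ (fun w'' => ℛ (t, w'')) (fun w'' => 𝒮 (t, w'')) k w') w := by
  intro t w
  have hamiltonJacobi : ∀ y, dirDeriv (1, 0) 𝒮 y
        + (∑ k, dirDeriv (quantumDir n k) 𝒮 y ^ 2) / (2 * m)
        - ℏ ^ 2 / (2 * m) * (∑ k, dirDeriv (quantumDir n k) (dirDeriv (quantumDir n k) ℛ) y) / ℛ y
      = (hybridFrame n d).legendre (fun y => HI M V y.2) y
        + (hybridFrame n d).poisson (fun y => HI M V y.2) 𝒮 y := by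
    rintro ⟨s, w'⟩
    rw [legendre_HI hV]
    simp (disch := fun_prop) only [← deriv_slice, ← dxH_slice, ← pbH_HI_slice hV]
    -- `laplxH` unfolds to the iterated `dxH` sum produced by the rewriting
    exact hMad1 s w'
  have transport : ∀ y, dirDeriv (1, 0) ℛ y
        + 1 / (2 * m * ℛ y) * ∑ k, dirDeriv (quantumDir n k)
            (fun z => ℛ z ^ 2 * dirDeriv (quantumDir n k) 𝒮 z) y
      = (hybridFrame n d).poisson (fun y => HI M V y.2) ℛ y := by
    rintro ⟨s, w'⟩
    simp (disch := fun_prop) only [← deriv_slice, ← dxH_slice, ← pbH_HI_slice hV]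
    exact hMad2 s w'
  simp (disch := fun_prop) only [hybDen_slice hℛ h𝒮, JQ_slice hℛ h𝒮, deriv_slice,
    pbH_HI_slice hV, dxH_slice]
  exact (hybridFrame n d).dirDeriv_hybridDensity_of_madelung (fun i => by simp [hybridFrame])
    (fun i k => by simp [hybridFrame_p_apply, quantumDir]) (contDiff_HI hV) h𝒮 hℛ
    (fun y => (hpos y.1 y.2).ne') hamiltonJacobi transport (t, w)

/-- Hybrid quantum–classical continuity equation: if `(𝒮, ℛ)`
solve the hybrid Madelung equations, then the hybrid density
`𝒟 = ℛ² + Σᵢ ∂_{pᵢ}(pᵢℛ²) + {ℛ², 𝒮}` satisfies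
`∂ₜ𝒟 = {H_I, 𝒟} − Σₖ ∂_{xᵏ}(J_Q)ₖ`. -/
theorem hybrid_continuity (n d : ℕ) (m M ℏ : ℝ) (hm : 0 < m) (hM : 0 < M) (hℏ : 0 < ℏ)
    (V : (Fin n → ℝ) × (Fin d → ℝ) → ℝ) (hV : ContDiff ℝ (⊤ : ℕ∞) V)
    (𝒮 ℛ : ℝ × Hyb n d → ℝ)
    (h𝒮 : ContDiff ℝ (⊤ : ℕ∞) 𝒮) (hℛ : ContDiff ℝ (⊤ : ℕ∞) ℛ)
    (hpos : ∀ t w, 0 < ℛ (t, w))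
    (hMad1 : ∀ (t : ℝ) (w : Hyb n d),
      deriv (fun s => 𝒮 (s, w)) t
          + (∑ k, dxH k (fun w' => 𝒮 (t, w')) w ^ 2) / (2 * m)
          - (ℏ ^ 2 / (2 * m)) * laplxH (fun w' => ℛ (t, w')) w / ℛ (t, w)
        = LI M V w + pbH (HI M V) (fun w' => 𝒮 (t, w')) w)
    (hMad2 : ∀ (t : ℝ) (w : Hyb n d),
      deriv (fun s => ℛ (s, w)) t
          + (1 / (2 * m * ℛ (t, w))) *
              (∑ k, dxH k (fun w' => ℛ (t, w') ^ 2 * dxH k (fun w'' => 𝒮 (t, w'')) w') w)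
        = pbH (HI M V) (fun w' => ℛ (t, w')) w) :
    ∀ (t : ℝ) (w : Hyb n d),
      deriv (fun s => hybDen (fun w' => ℛ (s, w')) (fun w' => 𝒮 (s, w')) w) t
        = pbH (HI M V)
            (fun w' => hybDen (fun w'' => ℛ (t, w'')) (fun w'' => 𝒮 (t, w'')) w') w
          - ∑ k, dxH k
              (fun w' => JQ m ℏ (fun w'' => ℛ (t, w'')) (fun w'' => 𝒮 (t, w'')) k w') w :=
  hybrid_continuity_general n d m M ℏ V hV 𝒮 ℛ h𝒮 hℛ hpos hMad1 hMad2
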